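/- Let x, ξ : ℝ → ℝ² be differentiable curves solving the Hamilton system ẋ(t) = g₁(x(t)) g₂(x(t)) Aᵀ x(t) and ξ̇(t) = − g₁(x(t)) g₂(x(t)) A ξ(t). Then for all t: (1/2) d/dt |x(t)|² = μ g₁(x(t)) g₂(x(t)) |x(t)|² and (1/2) d/dt |ξ(t)|² = − μ g₁(x(t)) g₂(x(t)) |ξ(t)|². Moreover, if a < |x(0)| < b, then a < |x(t)| < b for all t ∈ ℝ and t ↦ |x(t)|² is monotone nondecreasing, while every x₀ with |x₀| = a or |x₀| = b gives a stationary solution x(t) ≡ x₀. -/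

import Mathlib

open Matrix

/-- The matrix `A = [[μ, 1], [-1, μ]]`. -/
def matA (μ : ℝ) : Matrix (Fin 2) (Fin 2) ℝ := !![μ, 1; -1, μ]

/-- `g₁(x) = |x|² - a²`. -/
def g1 (a : ℝ) (x : Fin 2 → ℝ) : ℝ := x ⬝ᵥ x - a ^ 2

/-- `g₂(x) = b² - |x|²`. -/
def g2 (b : ℝ) (x : Fin 2 → ℝ) : ℝ := b ^ 2 - x ⬝ᵥ x

/-!
Writing `A = μ I + J` with `J` skew, one has `⟪v, A v⟫ = ⟪v, Aᵀ v⟫ = μ |v|²`, which gives both energy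
identities and shows that `r = |x|²` solves the scalar equation `r' = 2 μ r (r - a²) (b² - r)`.
Then `r - a²` and `b² - r` each solve a linear equation `u' = c u`, so
`u t = u 0 * exp (∫₀ᵗ c)` keeps its sign: the open annulus is invariant, and on it `r' ≥ 0`.
On the boundary circles `g₁ g₂` vanishes, so the vector field does too.
-/

theorem HasDerivAt.dotProduct_self {𝕜 ι : Type*} [NontriviallyNormedField 𝕜] [Fintype ι]
    {y : 𝕜 → ι → 𝕜} {v : ι → 𝕜} {t : 𝕜} (h : HasDerivAt y v t) :
    HasDerivAt (fun s => y s ⬝ᵥ y s) (2 * (y t ⬝ᵥ v)) t := by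
  have hi := hasDerivAt_pi.mp h
  refine (HasDerivAt.fun_sum fun i _ => (hi i).mul (hi i)).congr_deriv ?_
  simp only [dotProduct, Finset.mul_sum]
  exact Finset.sum_congr rfl fun i _ => by ring

theorem dotProduct_transpose_mulVec_self {n R : Type*} [Fintype n] [CommSemiring R]
    (M : Matrix n n R) (v : n → R) : v ⬝ᵥ Mᵀ *ᵥ v = v ⬝ᵥ M *ᵥ v := by
  rw [dotProduct_mulVec, vecMul_transpose, dotProduct_comm]

theorem dotProduct_matA_mulVec_self (μ : ℝ) (v : Fin 2 → ℝ) :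
    v ⬝ᵥ matA μ *ᵥ v = μ * (v ⬝ᵥ v) := by
  simp only [matA, dotProduct, Fin.sum_univ_two, mulVec, of_apply, cons_val', cons_val_zero,
    cons_val_one, empty_val', cons_val_fin_one]
  ring

theorem eq_mul_exp_integral_of_hasDerivAt {u c : ℝ → ℝ} (hc : Continuous c)
    (hu : ∀ t, HasDerivAt u (c t * u t) t) (t₀ t : ℝ) :
    u t = u t₀ * Real.exp (∫ s in t₀..t, c s) := by
  set C : ℝ → ℝ := fun t => ∫ s in t₀..t, c s
  have hC : ∀ t, HasDerivAt C (c t) t := fun t =>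
    (hc.integral_hasStrictDerivAt t₀ t).hasDerivAt
  have hconst : ∀ t, HasDerivAt (fun s => u s * Real.exp (-C s)) 0 t := fun t =>
    ((hu t).mul (hC t).neg.exp).congr_deriv (by ring)
  have key := is_const_of_deriv_eq_zero (fun s => (hconst s).differentiableAt)
    (fun s => (hconst s).deriv) t t₀
  simp only [C, intervalIntegral.integral_same, neg_zero, Real.exp_zero, mul_one] at key
  rw [← key, mul_assoc, ← Real.exp_add, neg_add_cancel, Real.exp_zero, mul_one]

theorem mem_Ioo_of_hasDerivAt_eq_mul_sub_mul_sub {r c : ℝ → ℝ} {p q : ℝ} (hc : Continuous c)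
    (hr : ∀ t, HasDerivAt r (c t * (r t - p) * (q - r t)) t) {t₀ : ℝ}
    (h₀ : r t₀ ∈ Set.Ioo p q) (t : ℝ) : r t ∈ Set.Ioo p q := by
  have hrc : Continuous r := continuous_iff_continuousAt.2 fun t => (hr t).continuousAt
  have hlow := eq_mul_exp_integral_of_hasDerivAt (u := fun t => r t - p)
    (c := fun t => c t * (q - r t)) (by fun_prop)
    (fun t => ((hr t).sub_const p).congr_deriv (by ring)) t₀ t
  have hup := eq_mul_exp_integral_of_hasDerivAt (u := fun t => q - r t)
    (c := fun t => -(c t * (r t - p))) (by fun_prop)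
    (fun t => ((hr t).const_sub q).congr_deriv (by ring)) t₀ t
  have h₁ : 0 < r t - p := hlow ▸ mul_pos (sub_pos.2 h₀.1) (Real.exp_pos _)
  have h₂ : 0 < q - r t := hup ▸ mul_pos (sub_pos.2 h₀.2) (Real.exp_pos _)
  exact ⟨sub_pos.1 h₁, sub_pos.1 h₂⟩

theorem g1_mul_g2_eq_zero {a b : ℝ} {v : Fin 2 → ℝ}
    (h : Real.sqrt (v ⬝ᵥ v) = a ∨ Real.sqrt (v ⬝ᵥ v) = b) : g1 a v * g2 b v = 0 := by
  have hsq : v ⬝ᵥ v = Real.sqrt (v ⬝ᵥ v) ^ 2 :=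
    (Real.sq_sqrt (dotProduct_self_star_nonneg v)).symm
  rcases h with h | h
  · exact mul_eq_zero_of_left (by rw [g1, hsq, h, sub_self]) _
  · exact mul_eq_zero_of_right _ (by rw [g2, hsq, h, sub_self])

theorem hamilton_radial_general (μ a b : ℝ) (hμ : 0 < μ) (ha : 0 < a)
    (x ξ : ℝ → Fin 2 → ℝ)
    (hx : ∀ t : ℝ, HasDerivAt x
      ((g1 a (x t) * g2 b (x t)) • ((matA μ)ᵀ.mulVec (x t))) t)
    (hξ : ∀ t : ℝ, HasDerivAt ξ
      (-(g1 a (x t) * g2 b (x t)) • ((matA μ).mulVec (ξ t))) t) :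
    (∀ t : ℝ, HasDerivAt (fun s => (1 / 2 : ℝ) * (x s ⬝ᵥ x s))
      (μ * g1 a (x t) * g2 b (x t) * (x t ⬝ᵥ x t)) t) ∧
    (∀ t : ℝ, HasDerivAt (fun s => (1 / 2 : ℝ) * (ξ s ⬝ᵥ ξ s))
      (-(μ * g1 a (x t) * g2 b (x t) * (ξ t ⬝ᵥ ξ t))) t) ∧
    ((a < Real.sqrt (x 0 ⬝ᵥ x 0) ∧ Real.sqrt (x 0 ⬝ᵥ x 0) < b) →
      (∀ t : ℝ, a < Real.sqrt (x t ⬝ᵥ x t) ∧ Real.sqrt (x t ⬝ᵥ x t) < b) ∧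
      Monotone fun t => x t ⬝ᵥ x t) ∧
    (∀ x₀ : Fin 2 → ℝ, (Real.sqrt (x₀ ⬝ᵥ x₀) = a ∨ Real.sqrt (x₀ ⬝ᵥ x₀) = b) →
      ∀ t : ℝ, HasDerivAt (fun _ : ℝ => x₀)
        ((g1 a x₀ * g2 b x₀) • ((matA μ)ᵀ.mulVec x₀)) t) := by
  have hr : ∀ t, HasDerivAt (fun s => x s ⬝ᵥ x s)
      (2 * μ * (x t ⬝ᵥ x t) * g1 a (x t) * g2 b (x t)) t := fun t =>
    (hx t).dotProduct_self.congr_deriv (by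
      rw [dotProduct_smul, smul_eq_mul, dotProduct_transpose_mulVec_self,
        dotProduct_matA_mulVec_self]
      ring)
  refine ⟨fun t => ((hr t).const_mul _).congr_deriv (by ring), fun t =>
    ((hξ t).dotProduct_self.const_mul (1 / 2 : ℝ)).congr_deriv (by
      rw [dotProduct_smul, smul_eq_mul, dotProduct_matA_mulVec_self]
      ring), ?_, fun x₀ h t => by simpa [g1_mul_g2_eq_zero h] using hasDerivAt_const t x₀⟩
  rintro ⟨h₀a, h₀b⟩
  have hb : 0 < b := ha.trans (h₀a.trans h₀b)
  have hrc : Continuous fun t => x t ⬝ᵥ x t :=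
    continuous_iff_continuousAt.2 fun t => (hr t).continuousAt
  have hmem : ∀ t, x t ⬝ᵥ x t ∈ Set.Ioo (a ^ 2) (b ^ 2) :=
    mem_Ioo_of_hasDerivAt_eq_mul_sub_mul_sub (c := fun t => 2 * μ * (x t ⬝ᵥ x t))
      (continuous_const.mul hrc)
      (fun t => (hr t).congr_deriv (by simp only [g1, g2]))
      ⟨(Real.lt_sqrt ha.le).1 h₀a, (Real.sqrt_lt' hb).1 h₀b⟩
  refine ⟨fun t => ⟨(Real.lt_sqrt ha.le).2 (hmem t).1, (Real.sqrt_lt' hb).2 (hmem t).2⟩, ?_⟩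
  refine monotone_of_deriv_nonneg (fun t => (hr t).differentiableAt) fun t => ?_
  rw [(hr t).deriv, g1, g2]
  have hxt : 0 ≤ x t ⬝ᵥ x t := dotProduct_self_star_nonneg (x t)
  exact mul_nonneg (mul_nonneg (by positivity) (sub_nonneg.2 (hmem t).1.le))
    (sub_nonneg.2 (hmem t).2.le)

/-- Along solutions of the Hamilton system: `(1/2) d/dt |x|² = μ g₁ g₂ |x|²` and
`(1/2) d/dt |ξ|² = -μ g₁ g₂ |ξ|²`; if `a < |x(0)| < b` then `a < |x(t)| < b` for all `t`
and `t ↦ |x(t)|²` is monotone nondecreasing; and every `x₀` with `|x₀| = a` or `|x₀| = b`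
gives a stationary solution `x(t) ≡ x₀`. -/
theorem hamilton_radial (μ a b : ℝ) (hμ : 0 < μ) (ha : 0 < a) (hab : a < b)
    (x ξ : ℝ → Fin 2 → ℝ)
    (hx : ∀ t : ℝ, HasDerivAt x
      ((g1 a (x t) * g2 b (x t)) • ((matA μ)ᵀ.mulVec (x t))) t)
    (hξ : ∀ t : ℝ, HasDerivAt ξ
      (-(g1 a (x t) * g2 b (x t)) • ((matA μ).mulVec (ξ t))) t) :
    (∀ t : ℝ, HasDerivAt (fun s => (1 / 2 : ℝ) * (x s ⬝ᵥ x s))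
      (μ * g1 a (x t) * g2 b (x t) * (x t ⬝ᵥ x t)) t) ∧
    (∀ t : ℝ, HasDerivAt (fun s => (1 / 2 : ℝ) * (ξ s ⬝ᵥ ξ s))
      (-(μ * g1 a (x t) * g2 b (x t) * (ξ t ⬝ᵥ ξ t))) t) ∧
    ((a < Real.sqrt (x 0 ⬝ᵥ x 0) ∧ Real.sqrt (x 0 ⬝ᵥ x 0) < b) →
      (∀ t : ℝ, a < Real.sqrt (x t ⬝ᵥ x t) ∧ Real.sqrt (x t ⬝ᵥ x t) < b) ∧
      Monotone fun t => x t ⬝ᵥ x t) ∧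
    (∀ x₀ : Fin 2 → ℝ, (Real.sqrt (x₀ ⬝ᵥ x₀) = a ∨ Real.sqrt (x₀ ⬝ᵥ x₀) = b) →
      ∀ t : ℝ, HasDerivAt (fun _ : ℝ => x₀)
        ((g1 a x₀ * g2 b x₀) • ((matA μ)ᵀ.mulVec x₀)) t) :=
  hamilton_radial_general μ a b hμ ha x ξ hx hξ
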